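/- Let μ^{(N)} and ν^{(N)} be Borel probability measures with finite second moment on the product space X^N, where X = ℝ^d, and let Π denote the average over i = 1,…,N of the pushforwards along the coordinate projections (x¹,…,x^N) ↦ x^i. Then W₂(Πμ^{(N)}, Πν^{(N)}) ≤ N^{−1/2} · W₂(μ^{(N)}, ν^{(N)}), where W₂ on X^N is taken with respect to the ℓ²-norm ‖𝒳‖² = Σ_i ‖X^i‖². -/
import Mathlib


open MeasureTheory ProbabilityTheory Real Filter
open scoped ENNReal NNReal

noncomputable section

namespace MFL

/-- Euclidean space `ℝ^d`. -/
abbrev Euc (d : ℕ) : Type := EuclideanSpace ℝ (Fin d)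

/-- `P(E)`: Borel probability measures with finite second moment. -/
def IsP {E : Type*} [MeasurableSpace E] [NormedAddCommGroup E] (μ : Measure E) : Prop :=
  IsProbabilityMeasure μ ∧ Integrable (fun x => ‖x‖ ^ 2) μ

/-- Kullback-Leibler divergence (real-valued convention, via the Radon-Nikodym derivative). -/
def KL {E : Type*} {mE : MeasurableSpace E} (μ ν : Measure E) : ℝ :=
  ∫ x, Real.log ((μ.rnDeriv ν x).toReal) ∂μ

/-- `γ` is a coupling of `μ` and `ν`. -/
def Coupling {E F : Type*} [MeasurableSpace E] [MeasurableSpace F]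
    (γ : Measure (E × F)) (μ : Measure E) (ν : Measure F) : Prop :=
  γ.map Prod.fst = μ ∧ γ.map Prod.snd = ν

/-- Wasserstein-type distance associated with the cost `c` and exponent `p`. -/
def WCost {E : Type*} [MeasurableSpace E] (c : E → E → ℝ) (p : ℝ)
    (μ ν : Measure E) : ℝ :=
  sInf {w | ∃ γ : Measure (E × E), Coupling γ μ ν ∧
    w = (∫ q, c q.1 q.2 ^ p ∂γ) ^ (1 / p)}

/-- 1-Wasserstein distance. -/
def W1 {E : Type*} [MeasurableSpace E] [PseudoMetricSpace E] (μ ν : Measure E) : ℝ :=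
  WCost dist 1 μ ν

/-- 2-Wasserstein distance. -/
def W2 {E : Type*} [MeasurableSpace E] [PseudoMetricSpace E] (μ ν : Measure E) : ℝ :=
  WCost dist 2 μ ν

/-- The mixture `(1-ε)μ + εν`. -/
def mix {E : Type*} [MeasurableSpace E] (ε : ℝ) (μ ν : Measure E) : Measure E :=
  ENNReal.ofReal (1 - ε) • μ + ENNReal.ofReal ε • ν

/-- Normalization of a finite measure to a probability measure. -/
def normalize {E : Type*} [MeasurableSpace E] (μ : Measure E) : Measure E :=
  (μ Set.univ)⁻¹ • μ

/-- The measure with density `e^{-U}` with respect to Lebesgue measure. -/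
def densMeasure {d : ℕ} (U : Euc d → ℝ) : Measure (Euc d) :=
  volume.withDensity fun x => ENNReal.ofReal (Real.exp (-U x))

/-- Normalized Gibbs measure `∝ exp(-U - h)`. -/
def gibbs {d : ℕ} (U h : Euc d → ℝ) : Measure (Euc d) :=
  normalize (volume.withDensity fun x => ENNReal.ofReal (Real.exp (-(U x) - h x)))

/-- Assumption 1 (regularity of a base measure `ρ = e^{-U}`). -/
structure Reg (d : ℕ) where
  U : Euc d → ℝ
  gU : Euc d → Euc d
  r : ℝ
  R : ℝ
  r_pos : 0 < r
  R_pos : 0 < R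
  strong : StrongConvexOn Set.univ r U
  hgrad : ∀ x, HasGradientAt U (gU x) x
  hlip : LipschitzWith (Real.toNNReal R) gU
  hzero : gU 0 = 0
  hprob : IsProbabilityMeasure (densMeasure U)

/-- The base probability measure of Assumption 1. -/
def Reg.meas {d : ℕ} (rg : Reg d) : Measure (Euc d) := densMeasure rg.U

/-- Entropy functional `Ent_ν(g) = E_ν[g log g] - E_ν[g] log E_ν[g]`. -/
def Entropy {E : Type*} {mE : MeasurableSpace E} (ν : Measure E) (g : E → ℝ) : ℝ :=
  (∫ x, g x * Real.log (g x) ∂ν) - (∫ x, g x ∂ν) * Real.log (∫ x, g x ∂ν)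

/-- Logarithmic Sobolev inequality with constant `α`. -/
def SatisfiesLSI {d : ℕ} (ν : Measure (Euc d)) (α : ℝ) : Prop :=
  ∀ f : Euc d → ℝ, ContDiff ℝ ((⊤ : ℕ∞) : WithTop ℕ∞) f →
    Entropy ν (fun x => f x ^ 2) ≤ (2 / α) * ∫ x, ‖gradient f x‖ ^ 2 ∂ν

/-- Talagrand's transport inequality with constant `α`. -/
def SatisfiesTalagrand {d : ℕ} (ν : Measure (Euc d)) (α : ℝ) : Prop :=
  ∀ μ : Measure (Euc d), IsProbabilityMeasure μ → μ ≪ ν →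
    (α / 2) * W2 μ ν ^ 2 ≤ KL μ ν

/-- `α` is a log-Sobolev (and Talagrand) constant valid for every Gibbs perturbation
`∝ ρ e^{-h/λ}` of the base measure `ρ = e^{-U}` by an `M`-Lipschitz potential `h`. -/
def IsLSIConst {d : ℕ} (rg : Reg d) (lam M α : ℝ) : Prop :=
  0 < α ∧ ∀ h : Euc d → ℝ, LipschitzWith (Real.toNNReal M) h →
    SatisfiesLSI (gibbs rg.U (fun x => h x / lam)) α ∧
    SatisfiesTalagrand (gibbs rg.U (fun x => h x / lam)) α

/-- Entropy-regularized objective `L_λ`. -/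
def Llam {dX dY : ℕ} (Lf : Measure (Euc dX) → Measure (Euc dY) → ℝ)
    (rm : Reg dX) (rn : Reg dY) (lam : ℝ)
    (μ : Measure (Euc dX)) (ν : Measure (Euc dY)) : ℝ :=
  Lf μ ν + lam * KL μ rm.meas - lam * KL ν rn.meas

/-- Nikaidô-Isoda error for `L_λ`. -/
def NI {dX dY : ℕ} (Lf : Measure (Euc dX) → Measure (Euc dY) → ℝ)
    (rm : Reg dX) (rn : Reg dY) (lam : ℝ)
    (μ : Measure (Euc dX)) (ν : Measure (Euc dY)) : ℝ :=
  sSup {c | ∃ ν', IsP ν' ∧ c = Llam Lf rm rn lam μ ν'} -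
    sInf {c | ∃ μ', IsP μ' ∧ c = Llam Lf rm rn lam μ' ν}

/-- Mixed Nash equilibrium (saddle point) of `L_λ` over `P(X) × P(Y)`. -/
def IsMNE {dX dY : ℕ} (Lf : Measure (Euc dX) → Measure (Euc dY) → ℝ)
    (rm : Reg dX) (rn : Reg dY) (lam : ℝ)
    (μs : Measure (Euc dX)) (νs : Measure (Euc dY)) : Prop :=
  IsP μs ∧ IsP νs ∧
    (∀ ν, IsP ν → Llam Lf rm rn lam μs ν ≤ Llam Lf rm rn lam μs νs) ∧
    (∀ μ, IsP μ → Llam Lf rm rn lam μs νs ≤ Llam Lf rm rn lam μ νs)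

/-- Average of the pushforwards of a measure on `E^N` along the coordinate projections. -/
def Pproj {N : ℕ} {E : Type*} [MeasurableSpace E] (μN : Measure (Fin N → E)) : Measure E :=
  (N : ℝ≥0∞)⁻¹ • ∑ i : Fin N, μN.map (fun xv => xv i)

end MFL

namespace MFL

private lemma map_finset_sum' {α β ι : Type*} [MeasurableSpace α] [MeasurableSpace β]
    (s : Finset ι) (μ : ι → Measure α) {f : α → β} (hf : Measurable f) :
    (∑ i ∈ s, μ i).map f = ∑ i ∈ s, (μ i).map f := by
  induction s using Finset.cons_induction with
  | empty => simp
  | cons a s ha ih => rw [Finset.sum_cons, Finset.sum_cons, Measure.map_add _ _ hf, ih]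


/-- Lemma: the averaged coordinate pushforward contracts the
2-Wasserstein distance by `N^{-1/2}`, where `X^N` carries the ℓ²-cost. -/
theorem pushforward_wasserstein {d N : ℕ} (hN : 1 ≤ N)
    (μN νN : Measure (Fin N → Euc d))
    (hμ : IsProbabilityMeasure μN) (hν : IsProbabilityMeasure νN)
    (hμ2 : Integrable (fun xv => ∑ i, ‖xv i‖ ^ 2) μN)
    (hν2 : Integrable (fun xv => ∑ i, ‖xv i‖ ^ 2) νN) :
    W2 (Pproj μN) (Pproj νN) ≤
      (Real.sqrt (N : ℝ))⁻¹ *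
        WCost (fun xv yv => Real.sqrt (∑ i, ‖xv i - yv i‖ ^ 2)) 2 μN νN := by
  classical
  have hNpos : (0:ℝ) < N := by exact_mod_cast hN
  set k : ℝ := (Real.sqrt (N:ℝ))⁻¹ with hk
  have hkpos : 0 < k := inv_pos.2 (Real.sqrt_pos.2 hNpos)
  rw [W2, WCost, WCost]
  set B := {w | ∃ γ : Measure ((Fin N → Euc d) × (Fin N → Euc d)), Coupling γ μN νN ∧
    w = (∫ q, (fun xv yv => Real.sqrt (∑ i, ‖xv i - yv i‖ ^ 2)) q.1 q.2 ^ (2:ℝ) ∂γ) ^ (1/(2:ℝ))}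
    with hB
  have hBne : B.Nonempty := by
    refine ⟨_, μN.prod νN, ⟨?_, ?_⟩, rfl⟩
    · rw [Measure.map_fst_prod]; simp
    · rw [Measure.map_snd_prod]; simp
  have hmain : ∀ w ∈ B, sInf {w | ∃ γ : Measure (Euc d × Euc d),
      Coupling γ (Pproj μN) (Pproj νN) ∧
      w = (∫ q, dist q.1 q.2 ^ (2:ℝ) ∂γ) ^ (1/(2:ℝ))} ≤ k * w := by
    rintro w ⟨γ, ⟨hγ1, hγ2⟩, hw⟩
    have mπ : ∀ i : Fin N, Measurable fun (x : Fin N → Euc d) => x i :=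
      fun i => measurable_pi_apply i
    have mpair : ∀ i : Fin N, Measurable
        (fun q : (Fin N → Euc d) × (Fin N → Euc d) => (q.1 i, q.2 i)) :=
      fun i => ((mπ i).comp measurable_fst).prodMk ((mπ i).comp measurable_snd)
    -- integrability of second moments under γ
    have hI1 : Integrable (fun q : (Fin N → Euc d) × (Fin N → Euc d) =>
        ∑ j, ‖q.1 j‖ ^ 2) γ := by
      have h2 := hμ2; rw [← hγ1] at h2
      exact (integrable_map_measure h2.aestronglyMeasurable measurable_fst.aemeasurable).1 h2
    have hI2 : Integrable (fun q : (Fin N → Euc d) × (Fin N → Euc d) =>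
        ∑ j, ‖q.2 j‖ ^ 2) γ := by
      have h2 := hν2; rw [← hγ2] at h2
      exact (integrable_map_measure h2.aestronglyMeasurable measurable_snd.aemeasurable).1 h2
    have hIi : ∀ i : Fin N, Integrable (fun q : (Fin N → Euc d) × (Fin N → Euc d) =>
        ‖q.1 i - q.2 i‖ ^ 2) γ := by
      intro i
      refine Integrable.mono' (((hI1.add hI2).const_mul 2)) ?_ ?_
      · exact ((((continuous_apply i).comp continuous_fst).sub
          ((continuous_apply i).comp continuous_snd)).norm.pow 2).aestronglyMeasurable
      · refine Filter.Eventually.of_forall fun q => ?_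
        have h1 : ‖q.1 i‖ ^ 2 ≤ ∑ j, ‖q.1 j‖ ^ 2 :=
          Finset.single_le_sum (f := fun j => ‖q.1 j‖ ^ 2)
            (fun j _ => sq_nonneg _) (Finset.mem_univ i)
        have h2 : ‖q.2 i‖ ^ 2 ≤ ∑ j, ‖q.2 j‖ ^ 2 :=
          Finset.single_le_sum (f := fun j => ‖q.2 j‖ ^ 2)
            (fun j _ => sq_nonneg _) (Finset.mem_univ i)
        have h3 : ‖q.1 i - q.2 i‖ ≤ ‖q.1 i‖ + ‖q.2 i‖ := norm_sub_le _ _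
        have h4 : (0:ℝ) ≤ ‖q.1 i - q.2 i‖ := norm_nonneg _
        rw [Real.norm_of_nonneg (sq_nonneg _)]
        simp only [Pi.add_apply]
        have h5 : ‖q.1 i - q.2 i‖ ^ 2 ≤ (‖q.1 i‖ + ‖q.2 i‖) ^ 2 :=
          pow_le_pow_left₀ h4 h3 2
        nlinarith [sq_nonneg (‖q.1 i‖ - ‖q.2 i‖)]
    set γ' : Measure (Euc d × Euc d) := (N : ℝ≥0∞)⁻¹ •
      ∑ i : Fin N, γ.map (fun q => (q.1 i, q.2 i)) with hγ'
    have hrpow2 : ∀ a b : Euc d, dist a b ^ (2:ℝ) = ‖a - b‖ ^ 2 := by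
      intro a b; rw [Real.rpow_two, dist_eq_norm]
    -- γ' is a coupling
    have hc1 : γ'.map Prod.fst = Pproj μN := by
      rw [hγ', Measure.map_smul, map_finset_sum' _ _ measurable_fst, Pproj]
      congr 1
      refine Finset.sum_congr rfl fun i _ => ?_
      rw [Measure.map_map measurable_fst (mpair i), ← hγ1,
        Measure.map_map (mπ i) measurable_fst]
      rfl
    have hc2 : γ'.map Prod.snd = Pproj νN := by
      rw [hγ', Measure.map_smul, map_finset_sum' _ _ measurable_snd, Pproj]
      congr 1
      refine Finset.sum_congr rfl fun i _ => ?_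
      rw [Measure.map_map measurable_snd (mpair i), ← hγ2,
        Measure.map_map (mπ i) measurable_snd]
      rfl
    -- the cost of γ'
    have hintm : ∀ i : Fin N, Integrable (fun p : Euc d × Euc d => dist p.1 p.2 ^ (2:ℝ))
        (γ.map (fun q => (q.1 i, q.2 i))) := by
      intro i
      have hcont : Continuous (fun p : Euc d × Euc d => dist p.1 p.2 ^ (2:ℝ)) := by
        simp only [hrpow2]
        exact (continuous_fst.sub continuous_snd).norm.pow 2
      rw [integrable_map_measure hcont.aestronglyMeasurable (mpair i).aemeasurable]
      have := hIi i
      simp only [Function.comp_def, hrpow2]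
      exact this
    have key : ∫ q, dist q.1 q.2 ^ (2:ℝ) ∂γ' =
        (N:ℝ)⁻¹ * ∫ q, ∑ i, ‖q.1 i - q.2 i‖ ^ 2 ∂γ := by
      rw [hγ', integral_smul_measure,
        integral_finset_sum_measure (fun i _ => hintm i)]
      have heach : ∀ i : Fin N, (∫ p, dist p.1 p.2 ^ (2:ℝ)
          ∂(γ.map (fun q => (q.1 i, q.2 i)))) = ∫ q, ‖q.1 i - q.2 i‖ ^ 2 ∂γ := by
        intro i
        have hcont : Continuous (fun p : Euc d × Euc d => dist p.1 p.2 ^ (2:ℝ)) := by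
          simp only [hrpow2]
          exact (continuous_fst.sub continuous_snd).norm.pow 2
        rw [integral_map (mpair i).aemeasurable hcont.aestronglyMeasurable]
        simp only [hrpow2]
      rw [Finset.sum_congr rfl fun i _ => heach i,
        ← integral_finset_sum _ (fun i _ => hIi i)]
      simp [ENNReal.toReal_inv]
    have hS : (0:ℝ) ≤ ∫ q, ∑ i, ‖q.1 i - q.2 i‖ ^ 2 ∂γ :=
      integral_nonneg fun q => Finset.sum_nonneg fun i _ => sq_nonneg _
    have hwval : w = (∫ q, ∑ i, ‖q.1 i - q.2 i‖ ^ 2 ∂γ) ^ (1/(2:ℝ)) := by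
      rw [hw]
      congr 1
      refine integral_congr_ae (Filter.Eventually.of_forall fun q => ?_)
      show Real.sqrt (∑ i, ‖q.1 i - q.2 i‖ ^ 2) ^ (2:ℝ) = ∑ i, ‖q.1 i - q.2 i‖ ^ 2
      rw [Real.rpow_two, Real.sq_sqrt (Finset.sum_nonneg fun i _ => sq_nonneg _)]
    have hbdd : BddBelow {w | ∃ γ : Measure (Euc d × Euc d),
        Coupling γ (Pproj μN) (Pproj νN) ∧
        w = (∫ q, dist q.1 q.2 ^ (2:ℝ) ∂γ) ^ (1/(2:ℝ))} := by
      refine ⟨0, fun x hx => ?_⟩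
      obtain ⟨γ'', _, hx⟩ := hx
      rw [hx]
      exact Real.rpow_nonneg (integral_nonneg fun q => Real.rpow_nonneg dist_nonneg _) _
    have hle : sInf {w | ∃ γ : Measure (Euc d × Euc d),
        Coupling γ (Pproj μN) (Pproj νN) ∧
        w = (∫ q, dist q.1 q.2 ^ (2:ℝ) ∂γ) ^ (1/(2:ℝ))} ≤
        (∫ q, dist q.1 q.2 ^ (2:ℝ) ∂γ') ^ (1/(2:ℝ)) :=
      csInf_le hbdd ⟨γ', ⟨hc1, hc2⟩, rfl⟩
    calc sInf _ ≤ (∫ q, dist q.1 q.2 ^ (2:ℝ) ∂γ') ^ (1/(2:ℝ)) := hle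
      _ = ((N:ℝ)⁻¹ * ∫ q, ∑ i, ‖q.1 i - q.2 i‖ ^ 2 ∂γ) ^ (1/(2:ℝ)) := by rw [key]
      _ = k * w := by
          rw [Real.mul_rpow (inv_nonneg.2 hNpos.le) hS, hwval, hk,
            ← Real.sqrt_eq_rpow, Real.sqrt_inv]
  rw [mul_comm, ← div_le_iff₀ hkpos]
  refine le_csInf hBne fun w hw => ?_
  rw [div_le_iff₀ hkpos, mul_comm]
  exact hmain w hw


end MFL
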